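/- arXiv:1611.06097 — 2 statements merged into one kernel-verified Lean document; each statement's English description precedes it below -/
import Mathlib

section
/- Let A = S₁VΣ^{-1}U* where S₀ = UΣV* is the reduced SVD of S₀ (full column rank), and let à = U*S₁VΣ^{-1}. If (λ, w) is an eigenpair of à with λ ≠ 0, then φ = (1/λ) S₁VΣ^{-1}w satisfies Aφ = λφ, i.e., the exact DMD mode φ is an eigenvector of the full DMD operator A with eigenvalue λ. -/
open Matrix

/-- Exact DMD eigenvector correspondence (Tu et al.): if `(λ, w)` is an
eigenpair of `Ã = UᴴS₁VΣ⁻¹` with `λ ≠ 0`, then `φ = (1/λ)S₁VΣ⁻¹w` is an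
eigenvector of `A = S₁VΣ⁻¹Uᴴ` with eigenvalue `λ`. -/
theorem exact_dmd_eigenpair {N m : ℕ}
    (S0 S1 U : Matrix (Fin N) (Fin m) ℂ)
    (Sg V : Matrix (Fin m) (Fin m) ℂ)
    (hSVD : S0 = U * Sg * Vᴴ) (hU : Uᴴ * U = 1) (hV : Vᴴ * V = 1)
    (hSg : IsUnit Sg)
    (w : Fin m → ℂ) (lam : ℂ) (hlam : lam ≠ 0)
    (heig : (Uᴴ * S1 * V * Sg⁻¹) *ᵥ w = lam • w) :
    (S1 * V * Sg⁻¹ * Uᴴ) *ᵥ ((1 / lam) • ((S1 * V * Sg⁻¹) *ᵥ w))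
      = lam • ((1 / lam) • ((S1 * V * Sg⁻¹) *ᵥ w)) := by
  have key : (S1 * V * Sg⁻¹ * Uᴴ) *ᵥ ((S1 * V * Sg⁻¹) *ᵥ w)
      = (S1 * V * Sg⁻¹) *ᵥ ((Uᴴ * S1 * V * Sg⁻¹) *ᵥ w) := by
    simp only [mulVec_mulVec, Matrix.mul_assoc]
  rw [mulVec_smul, key, heig, mulVec_smul, smul_smul, smul_smul,
    one_div, inv_mul_cancel₀ hlam, mul_inv_cancel₀ hlam]
end

section
/- The least-squares problem min_α ‖S − Φ D_α V_and‖_F², with Φ = UΣ_w W (columns being DMD modes scaled in a POD basis), reduces to the quadratic program min_α α*Pα − q*α − α*q + s with P = (W*W) ∘ conj(V_and V_and*) and q = conj(diag(V_and V Σ* W)); if P is Hermitian positive definite, the unique minimizer is α_opt = P^{-1}q. -/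
open Matrix
open scoped ComplexOrder

/-! Writing `‖S - Φ D_α V_and‖_F² = tr((S - M)ᴴ(S - M))` and cycling traces turns every term
into a form in `α`; the Hadamard product comes from `tr(D_αᴴ A D_α B) = αᴴ (A ∘ Bᵀ) α`.
With `Φ = UW` and `S = UΣVᴴ`, orthonormality of the columns of `U` and `V` reduces `ΦᴴΦ`,
`SᴴΦ` and `SᴴS` to `WᴴW`, `VΣᴴW` and `ΣᴴΣ`. Completing the square,
`f(α) - f(P⁻¹q) = (α - P⁻¹q)ᴴ P (α - P⁻¹q)`, which is positive off `P⁻¹q` when `P` is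
positive definite. -/

namespace Matrix

variable {m n r R : Type*} [Fintype m] [Fintype n] [Fintype r]

theorem ofReal_sum_sum_norm_sq {𝕜 : Type*} [RCLike 𝕜] (A : Matrix m n 𝕜) :
    ((∑ i, ∑ k, ‖A i k‖ ^ 2 : ℝ) : 𝕜) = (Aᴴ * A).trace := by
  push_cast
  rw [Finset.sum_comm]
  simp only [trace, diag, mul_apply, conjTranspose_apply, RCLike.star_def, RCLike.conj_mul]

section CommRing

variable [CommRing R] [StarRing R]

def quadraticObjective (P : Matrix r r R) (q : r → R) (s : R) (a : r → R) : R :=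
  star a ⬝ᵥ (P *ᵥ a) - star q ⬝ᵥ a - star a ⬝ᵥ q + s

theorem trace_conjTranspose_mul_eq_star (A B : Matrix m n R) :
    (Aᴴ * B).trace = star (Bᴴ * A).trace := by
  rw [← trace_conjTranspose, conjTranspose_mul, conjTranspose_conjTranspose]

theorem trace_conjTranspose_mul_diagonal_mul [DecidableEq r] (S : Matrix m n R)
    (Φ : Matrix m r R) (Vand : Matrix r n R) (a : r → R) :
    (Sᴴ * (Φ * diagonal a * Vand)).trace
      = star (fun i => star ((Vand * Sᴴ * Φ) i i)) ⬝ᵥ a := by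
  rw [← Matrix.mul_assoc, ← Matrix.mul_assoc, trace_mul_cycle, trace_mul_comm,
    ← Matrix.mul_assoc Vand]
  simp [trace, diagonal_mul, dotProduct, mul_comm]

theorem trace_conjTranspose_mul_self_diagonal [DecidableEq r] (Φ : Matrix m r R)
    (Vand : Matrix r n R) (a : r → R) :
    ((Φ * diagonal a * Vand)ᴴ * (Φ * diagonal a * Vand)).trace
      = star a ⬝ᵥ (((Φᴴ * Φ) ⊙ (Vand * Vandᴴ).map star) *ᵥ a) := by
  have hV : ((Vand * Vandᴴ).map star * diagonal a)ᵀ = diagonal a * (Vand * Vandᴴ) := by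
    rw [transpose_mul, diagonal_transpose]
    exact congrArg _ (isHermitian_mul_conjTranspose_self Vand).eq
  rw [dotProduct_mulVec, dotProduct_vecMul_hadamard, hV, conjTranspose_mul, conjTranspose_mul,
    diagonal_conjTranspose]
  simp only [Matrix.mul_assoc]
  rw [trace_mul_comm]
  simp only [Matrix.mul_assoc]

theorem trace_conjTranspose_mul_self_sub_diagonal [DecidableEq r] (S : Matrix m n R)
    (Φ : Matrix m r R) (Vand : Matrix r n R) (a : r → R) :
    ((S - Φ * diagonal a * Vand)ᴴ * (S - Φ * diagonal a * Vand)).trace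
      = quadraticObjective ((Φᴴ * Φ) ⊙ (Vand * Vandᴴ).map star)
          (fun i => star ((Vand * Sᴴ * Φ) i i)) (Sᴴ * S).trace a := by
  rw [conjTranspose_sub, Matrix.sub_mul, Matrix.mul_sub, Matrix.mul_sub, trace_sub, trace_sub,
    trace_sub, trace_conjTranspose_mul_eq_star (Φ * diagonal a * Vand) S,
    trace_conjTranspose_mul_diagonal_mul, trace_conjTranspose_mul_self_diagonal,
    ← star_dotProduct a, quadraticObjective]
  ring

theorem quadraticObjective_sub [DecidableEq r] {P : Matrix r r R} (hP : P.IsHermitian)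
    {q a₀ : r → R} (hq : P *ᵥ a₀ = q) (s : R) (a : r → R) :
    quadraticObjective P q s a - quadraticObjective P q s a₀
      = star (a - a₀) ⬝ᵥ (P *ᵥ (a - a₀)) := by
  have hq' : ∀ x, star a₀ ⬝ᵥ (P *ᵥ x) = star q ⬝ᵥ x := fun x => by
    rw [dotProduct_mulVec, ← hq, star_mulVec, hP.eq]
  have hq₀ : star q ⬝ᵥ a₀ = star a₀ ⬝ᵥ q := by rw [← hq', hq]
  simp only [quadraticObjective, star_sub, mulVec_sub, sub_dotProduct, dotProduct_sub, hq, hq',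
    hq₀]
  ring

theorem quadraticObjective_lt [PartialOrder R] [IsOrderedAddMonoid R] [DecidableEq r]
    {P : Matrix r r R} (hP : P.PosDef) {q a₀ : r → R} (hq : P *ᵥ a₀ = q) (s : R) {a : r → R}
    (ha : a ≠ a₀) : quadraticObjective P q s a₀ < quadraticObjective P q s a := by
  rw [← sub_pos, quadraticObjective_sub hP.isHermitian hq]
  exact hP.dotProduct_mulVec_pos (sub_ne_zero.mpr ha)

end CommRing

end Matrix

/-- Optimal DMD amplitudes (Jovanović–Schmid–Nichols): with the reduced SVD
`S = UΣVᴴ`, the objective `‖S - Φ D_α V_and‖_F²` with `Φ` the DMD modes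
expressed in the POD basis (`Φ = U W`) reduces to the quadratic form
`α*Pα - q*α - α*q + s`, `P = (WᴴW) ∘ conj(V_and V_andᴴ)`,
`q = conj(diag(V_and V Σᴴ W))`, `s = tr(ΣᴴΣ)`; if `P` is Hermitian positive
definite, the unique minimizer is `α_opt = P⁻¹q`. -/
theorem dmd_optimal_amplitudes {N r J : ℕ}
    (S : Matrix (Fin N) (Fin J) ℂ) (U : Matrix (Fin N) (Fin r) ℂ)
    (Sg : Matrix (Fin r) (Fin r) ℂ) (V : Matrix (Fin J) (Fin r) ℂ)
    (hSVD : S = U * Sg * Vᴴ) (hU : Uᴴ * U = 1) (hV : Vᴴ * V = 1)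
    (W : Matrix (Fin r) (Fin r) ℂ) (Vand : Matrix (Fin r) (Fin J) ℂ)
    (P : Matrix (Fin r) (Fin r) ℂ) (q : Fin r → ℂ) (s : ℂ)
    (hP : P = (Wᴴ * W).hadamard ((Vand * Vandᴴ).map (starRingEnd ℂ)))
    (hq : q = fun i => starRingEnd ℂ ((Vand * V * Sgᴴ * W) i i))
    (hs : s = (Sgᴴ * Sg).trace)
    (obj : (Fin r → ℂ) → ℝ)
    (hobj : ∀ a, obj a
        = ∑ i, ∑ k, ‖(S - U * W * Matrix.diagonal a * Vand) i k‖ ^ 2) :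
    (∀ a : Fin r → ℂ,
      (obj a : ℂ) = star a ⬝ᵥ (P *ᵥ a) - star q ⬝ᵥ a - star a ⬝ᵥ q + s) ∧
    (P.PosDef →
      (∀ a : Fin r → ℂ, obj (P⁻¹ *ᵥ q) ≤ obj a) ∧
      (∀ a : Fin r → ℂ, obj a = obj (P⁻¹ *ᵥ q) → a = P⁻¹ *ᵥ q)) := by
  have hΦ : (U * W)ᴴ * (U * W) = Wᴴ * W := by
    rw [conjTranspose_mul, Matrix.mul_assoc, ← Matrix.mul_assoc Uᴴ, hU, Matrix.one_mul]
  have hSΦ : Vand * Sᴴ * (U * W) = Vand * V * Sgᴴ * W := by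
    simp only [hSVD, conjTranspose_mul, conjTranspose_conjTranspose, Matrix.mul_assoc]
    rw [← Matrix.mul_assoc Uᴴ U, hU, Matrix.one_mul]
  have hSS : (Sᴴ * S).trace = s := by
    simp only [hs, hSVD, conjTranspose_mul, conjTranspose_conjTranspose, Matrix.mul_assoc]
    rw [← Matrix.mul_assoc Uᴴ U, hU, Matrix.one_mul, trace_mul_comm, Matrix.mul_assoc,
      Matrix.mul_assoc Sg, hV, Matrix.mul_one]
  have hQ : ∀ a, (obj a : ℂ) = quadraticObjective P q s a := by
    intro a
    rw [hobj]
    refine (ofReal_sum_sum_norm_sq (S - U * W * diagonal a * Vand)).trans ?_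
    rw [trace_conjTranspose_mul_self_sub_diagonal, hΦ, hSΦ, hSS, hP, hq]
    rfl
  refine ⟨hQ, fun hPD => ?_⟩
  have hopt : P *ᵥ (P⁻¹ *ᵥ q) = q := by
    rw [mulVec_mulVec, mul_nonsing_inv P (P.isUnit_iff_isUnit_det.mp hPD.isUnit), one_mulVec]
  have hlt : ∀ a, a ≠ P⁻¹ *ᵥ q → obj (P⁻¹ *ᵥ q) < obj a := fun a ha => by
    have := quadraticObjective_lt hPD hopt s ha
    rwa [← hQ, ← hQ, Complex.real_lt_real] at this
  exact ⟨fun a => (eq_or_ne a _).elim (fun h => h ▸ le_rfl) (fun h => (hlt a h).le),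
    fun a h => by_contra fun hne => (hlt a hne).ne' h⟩
end
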